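/- arXiv:2006.03381 — 3 statements merged into one kernel-verified Lean document; each statement's English description precedes it below -/
import Mathlib

section
/- Let λ₁, λ₂ > 0 and let θ₀ ∈ ℝ be such that ‖A(λ₁, λ₂, θ₀)‖ > 1. Then the function θ ↦ ‖A(λ₁, λ₂, θ)‖ is differentiable at θ₀ and its logarithmic derivative there equals (d/dθ)‖A(λ₁,λ₂,θ)‖·‖A(λ₁,λ₂,θ)‖^{−1} = ((λ₁²λ₂^{−2} + λ₁^{−2}λ₂²) − (λ₁²λ₂² + λ₁^{−2}λ₂^{−2}))·sin(2θ₀) / (2·√((‖A(λ₁,λ₂,θ₀)‖² + ‖A(λ₁,λ₂,θ₀)‖^{−2})² − 4)). -/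
/-!
For a real `2 × 2` matrix `A`, `‖A‖²` is the larger eigenvalue of the Gram matrix `AᵀA`, i.e. the
larger root of `μ² - Fμ + (det A)²`, where `F` is the sum of the squared entries of `A`.
For `A = A(λ₁, λ₂, θ)` we have `det A = 1` and `F = a cos² θ + b sin² θ` with
`a = λ₁²λ₂² + λ₁⁻²λ₂⁻²`, `b = λ₁²λ₂⁻² + λ₁⁻²λ₂²`, so `‖A‖ = σ(F)` where `σ(t)² + σ(t)⁻² = t`.
The hypothesis `‖A‖ > 1` is what makes `F > 2`, where `σ` is differentiable with
`σ'(t) = σ(t) / (2√(t² - 4))`; the chain rule then gives the logarithmic derivative.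
-/

/-- Operator (Euclidean) norm of a real 2×2 matrix. -/
noncomputable def opNorm (A : Matrix (Fin 2) (Fin 2) ℝ) : ℝ :=
  ‖Matrix.toEuclideanCLM (𝕜 := ℝ) A‖

/-- `A(λ₁, λ₂, θ) = diag(λ₁, λ₁⁻¹) · R_θ · diag(λ₂, λ₂⁻¹)`. -/
noncomputable def Amat (l1 l2 θ : ℝ) : Matrix (Fin 2) (Fin 2) ℝ :=
  !![l1, 0; 0, l1⁻¹] *
    !![Real.cos θ, -Real.sin θ; Real.sin θ, Real.cos θ] *
    !![l2, 0; 0, l2⁻¹]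

lemma quadForm_le_of_mul_eq_sq {α β γ μ : ℝ} (hα : α ≤ μ) (hγ : γ ≤ μ)
    (hμ : (μ - α) * (μ - γ) = β ^ 2) (u v : ℝ) :
    α * u ^ 2 + 2 * β * u * v + γ * v ^ 2 ≤ μ * (u ^ 2 + v ^ 2) := by
  rcases (add_nonneg (sub_nonneg.2 hα) (sub_nonneg.2 hγ)).eq_or_lt with h | h
  · obtain rfl : α = μ := by linarith
    obtain rfl : γ = α := by linarith
    obtain rfl : β = 0 := by nlinarith
    linarith
  -- with `p = μ - α`, `q = μ - γ`, `pq = β²`: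
  -- `(p + q) (p u² - 2β u v + q v²) = (p u - β v)² + (q v - β u)²`
  · nlinarith [sq_nonneg ((μ - α) * u - β * v), sq_nonneg ((μ - γ) * v - β * u)]

lemma exists_quadForm_eq_of_mul_eq_sq {α β γ μ : ℝ} (hμ : (μ - α) * (μ - γ) = β ^ 2) :
    ∃ u v : ℝ, (u, v) ≠ 0 ∧ α * u ^ 2 + 2 * β * u * v + γ * v ^ 2 = μ * (u ^ 2 + v ^ 2) := by
  by_cases h : β = 0 ∧ μ = α
  · exact ⟨1, 0, by simp, by rw [h.1, h.2]; ring⟩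
  · refine ⟨β, μ - α, ?_, by linear_combination (α - μ) * hμ⟩
    intro h0
    simp only [Prod.mk_eq_zero, sub_eq_zero] at h0
    exact h ⟨h0.1, h0.2⟩

lemma ContinuousLinearMap.sq_opNorm_eq_of_bound {𝕜 E F : Type*} [NontriviallyNormedField 𝕜]
    [SeminormedAddCommGroup E] [SeminormedAddCommGroup F] [NormedSpace 𝕜 E] [NormedSpace 𝕜 F]
    (f : E →L[𝕜] F) {μ : ℝ} (hle : ∀ x, ‖f x‖ ^ 2 ≤ μ * ‖x‖ ^ 2) {x : E} (hx : ‖x‖ ≠ 0)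
    (heq : ‖f x‖ ^ 2 = μ * ‖x‖ ^ 2) : ‖f‖ ^ 2 = μ := by
  replace hx : 0 < ‖x‖ ^ 2 := by positivity
  have hμ : 0 ≤ μ := nonneg_of_mul_nonneg_left (heq ▸ sq_nonneg _) hx
  apply le_antisymm
  · have : ‖f‖ ≤ √μ := f.opNorm_le_bound (Real.sqrt_nonneg μ) fun y => by
      rw [← Real.sqrt_sq (norm_nonneg (f y)), ← Real.sqrt_sq (norm_nonneg y), ← Real.sqrt_mul hμ]
      exact Real.sqrt_le_sqrt (hle y)
    calc ‖f‖ ^ 2 ≤ √μ ^ 2 := by gcongr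
      _ = μ := Real.sq_sqrt hμ
  · have : μ * ‖x‖ ^ 2 ≤ ‖f‖ ^ 2 * ‖x‖ ^ 2 := by
      rw [← heq, ← mul_pow]; gcongr; exact f.le_opNorm x
    exact le_of_mul_le_mul_right this hx

lemma norm_toEuclideanCLM_fin_two_sq (A : Matrix (Fin 2) (Fin 2) ℝ)
    (x : EuclideanSpace ℝ (Fin 2)) :
    ‖Matrix.toEuclideanCLM (𝕜 := ℝ) A x‖ ^ 2 =
      (A 0 0 ^ 2 + A 1 0 ^ 2) * x 0 ^ 2 + 2 * (A 0 0 * A 0 1 + A 1 0 * A 1 1) * x 0 * x 1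
        + (A 0 1 ^ 2 + A 1 1 ^ 2) * x 1 ^ 2 := by
  rw [EuclideanSpace.real_norm_sq_eq]
  simp only [Matrix.ofLp_toEuclideanCLM, Matrix.mulVec, dotProduct, Fin.sum_univ_two]
  ring

lemma sq_opNorm_fin_two (A : Matrix (Fin 2) (Fin 2) ℝ) :
    opNorm A ^ 2 =
      (∑ i, ∑ j, A i j ^ 2 + √((∑ i, ∑ j, A i j ^ 2) ^ 2 - 4 * A.det ^ 2)) / 2 := by
  set α := A 0 0 ^ 2 + A 1 0 ^ 2
  set γ := A 0 1 ^ 2 + A 1 1 ^ 2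
  set β := A 0 0 * A 0 1 + A 1 0 * A 1 1
  have hF : ∑ i, ∑ j, A i j ^ 2 = α + γ := by simp only [Fin.sum_univ_two]; ring
  have hdisc : (α + γ) ^ 2 - 4 * A.det ^ 2 = (α - γ) ^ 2 + 4 * β ^ 2 := by
    rw [Matrix.det_fin_two]; ring
  rw [hF, hdisc]
  set δ := √((α - γ) ^ 2 + 4 * β ^ 2)
  have hδ : |α - γ| ≤ δ := Real.abs_le_sqrt (by nlinarith)
  have hδsq : δ ^ 2 = (α - γ) ^ 2 + 4 * β ^ 2 := Real.sq_sqrt (by positivity)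
  obtain ⟨hδ₁, hδ₂⟩ := abs_le.1 hδ
  -- `μ` is the larger eigenvalue of the Gram matrix `!![α, β; β, γ]` of `A`
  set μ := (α + γ + δ) / 2 with hμ_def
  have hα : α ≤ μ := by linarith
  have hγ : γ ≤ μ := by linarith
  have hμ : (μ - α) * (μ - γ) = β ^ 2 := by linear_combination hδsq / 4
  obtain ⟨u, v, huv, heq⟩ := exists_quadForm_eq_of_mul_eq_sq hμ
  refine (Matrix.toEuclideanCLM (𝕜 := ℝ) A).sq_opNorm_eq_of_bound (fun x => ?_)
    (x := WithLp.toLp 2 ![u, v]) ?_ ?_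
  · rw [norm_toEuclideanCLM_fin_two_sq, EuclideanSpace.real_norm_sq_eq, Fin.sum_univ_two]
    exact quadForm_le_of_mul_eq_sq hα hγ hμ _ _
  · simpa [Prod.ext_iff] using huv
  · rw [norm_toEuclideanCLM_fin_two_sq, EuclideanSpace.real_norm_sq_eq, Fin.sum_univ_two]
    simpa using heq

/-- The larger singular value of a determinant-one `2 × 2` matrix whose squared entries sum
to `t`. -/
noncomputable def sigmaMax (t : ℝ) : ℝ := √((t + √(t ^ 2 - 4)) / 2)

lemma opNorm_eq_sigmaMax (A : Matrix (Fin 2) (Fin 2) ℝ) (hA : A.det = 1) :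
    opNorm A = sigmaMax (∑ i, ∑ j, A i j ^ 2) := by
  have h := sq_opNorm_fin_two A
  rw [hA, one_pow, mul_one] at h
  rw [sigmaMax, ← h]
  exact (Real.sqrt_sq (norm_nonneg _)).symm

lemma two_lt_of_one_lt_sigmaMax {t : ℝ} (h : 1 < sigmaMax t) : 2 < t := by
  by_contra! ht
  refine h.not_ge (Real.sqrt_le_one.2 ?_)
  have : √(t ^ 2 - 4) ≤ 2 - t := Real.sqrt_le_iff.2 ⟨by linarith, by nlinarith⟩
  linarith

lemma sigmaMax_sq_add_zpow_neg_two {t : ℝ} (ht : 2 ≤ t) :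
    sigmaMax t ^ 2 + sigmaMax t ^ (-2 : ℤ) = t := by
  have hd : √(t ^ 2 - 4) ^ 2 = t ^ 2 - 4 := Real.sq_sqrt (by nlinarith)
  have hm : sigmaMax t ^ 2 = (t + √(t ^ 2 - 4)) / 2 :=
    Real.sq_sqrt (by positivity)
  have hinv : (sigmaMax t ^ 2)⁻¹ = (t - √(t ^ 2 - 4)) / 2 := by
    rw [hm]; apply inv_eq_of_mul_eq_one_right; linear_combination -hd / 4
  rw [zpow_neg, zpow_ofNat, hinv, hm]; ring

lemma hasDerivAt_sigmaMax {t : ℝ} (ht : 2 < t) :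
    HasDerivAt sigmaMax (sigmaMax t / (2 * √(t ^ 2 - 4))) t := by
  have h4 : 0 < t ^ 2 - 4 := by nlinarith
  have hd : 0 < √(t ^ 2 - 4) := Real.sqrt_pos.2 h4
  have hm : 0 < (t + √(t ^ 2 - 4)) / 2 := by positivity
  have hdisc : HasDerivAt (fun s => s ^ 2 - 4) (2 * t) t := by
    simpa using (hasDerivAt_pow 2 t).sub_const 4
  have h := (((hasDerivAt_id t).add (hdisc.sqrt h4.ne')).div_const 2).sqrt hm.ne'
  simp only [Pi.add_apply, id] at h
  refine h.congr_deriv ?_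
  have hs := Real.sq_sqrt hm.le
  unfold sigmaMax
  field_simp
  linear_combination -2 * hs

lemma hasDerivAt_mul_cos_sq_add_mul_sin_sq (a b x : ℝ) :
    HasDerivAt (fun θ => a * Real.cos θ ^ 2 + b * Real.sin θ ^ 2)
      ((b - a) * Real.sin (2 * x)) x := by
  refine ((((Real.hasDerivAt_cos x).pow 2).const_mul a).add
    (((Real.hasDerivAt_sin x).pow 2).const_mul b)).congr_deriv ?_
  rw [Real.sin_two_mul]; ring

lemma det_Amat {l1 l2 : ℝ} (h1 : l1 ≠ 0) (h2 : l2 ≠ 0) (θ : ℝ) :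
    (Amat l1 l2 θ).det = 1 := by
  rw [Amat, Matrix.det_mul, Matrix.det_mul, Matrix.det_fin_two_of, Matrix.det_fin_two_of,
    Matrix.det_fin_two_of]
  field_simp
  linear_combination Real.cos_sq_add_sin_sq θ

lemma sum_sq_Amat (l1 l2 θ : ℝ) :
    ∑ i, ∑ j, Amat l1 l2 θ i j ^ 2 =
      (l1 ^ (2 : ℤ) * l2 ^ (2 : ℤ) + l1 ^ (-2 : ℤ) * l2 ^ (-2 : ℤ)) * Real.cos θ ^ 2
        + (l1 ^ (2 : ℤ) * l2 ^ (-2 : ℤ) + l1 ^ (-2 : ℤ) * l2 ^ (2 : ℤ)) * Real.sin θ ^ 2 := by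
  rw [Amat, Matrix.mul_fin_two, Matrix.mul_fin_two]
  simp only [Fin.sum_univ_two, Matrix.of_apply, Matrix.cons_val', Matrix.cons_val_zero,
    Matrix.cons_val_one, Matrix.cons_val_fin_one, zpow_neg, zpow_ofNat]
  ring

/-- Logarithmic derivative of `θ ↦ ‖A(λ₁,λ₂,θ)‖` at a point where `‖A‖ > 1`. -/
theorem hasDerivAt_norm_theta (l1 l2 : ℝ) (h1 : 0 < l1) (h2 : 0 < l2)
    (θ₀ : ℝ) (hA : 1 < opNorm (Amat l1 l2 θ₀)) :
    ∃ D : ℝ, HasDerivAt (fun θ => opNorm (Amat l1 l2 θ)) D θ₀ ∧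
      D * (opNorm (Amat l1 l2 θ₀))⁻¹ =
        ((l1 ^ (2 : ℤ) * l2 ^ (-2 : ℤ) + l1 ^ (-2 : ℤ) * l2 ^ (2 : ℤ))
            - (l1 ^ (2 : ℤ) * l2 ^ (2 : ℤ) + l1 ^ (-2 : ℤ) * l2 ^ (-2 : ℤ)))
          * Real.sin (2 * θ₀)
          / (2 * Real.sqrt
              ((opNorm (Amat l1 l2 θ₀) ^ 2 + (opNorm (Amat l1 l2 θ₀)) ^ (-2 : ℤ)) ^ 2 - 4)) := by
  set a := l1 ^ (2 : ℤ) * l2 ^ (2 : ℤ) + l1 ^ (-2 : ℤ) * l2 ^ (-2 : ℤ)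
  set b := l1 ^ (2 : ℤ) * l2 ^ (-2 : ℤ) + l1 ^ (-2 : ℤ) * l2 ^ (2 : ℤ)
  have hN (θ : ℝ) :
      opNorm (Amat l1 l2 θ) = sigmaMax (a * Real.cos θ ^ 2 + b * Real.sin θ ^ 2) := by
    rw [opNorm_eq_sigmaMax _ (det_Amat h1.ne' h2.ne' θ), sum_sq_Amat]
  simp only [hN] at hA ⊢
  set t₀ := a * Real.cos θ₀ ^ 2 + b * Real.sin θ₀ ^ 2
  have ht₀ : 2 < t₀ := two_lt_of_one_lt_sigmaMax hA
  have hderiv :=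
    (hasDerivAt_sigmaMax ht₀).comp θ₀ (hasDerivAt_mul_cos_sq_add_mul_sin_sq a b θ₀)
  refine ⟨_, hderiv, ?_⟩
  rw [sigmaMax_sq_add_zpow_neg_two ht₀.le]
  field_simp [(zero_lt_one.trans hA).ne']
end

section
/- There exists an absolute constant C > 0 such that for all real numbers ε₁, ε₂ with 0 < ε₂ ≤ ε₁ and every M ≥ √2·ε₁, one has |∫₀^M sgn(x² − ε₁²)/√((x² − ε₁²)² + ε₂⁴) dx| ≤ C/ε₁, where sgn(t) equals 1 for t > 0, −1 for t < 0, and 0 for t = 0. -/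
open Real Set intervalIntegral MeasureTheory

/-!
The substitution `x = √(2ε₁² - y²)` maps `[0, ε₁]` onto `[ε₁, √2 ε₁]` and turns `x² - ε₁²` into
`ε₁² - y²`, so for an even kernel `g` the negative contribution of `[0, ε₁]` cancels the positive
one of `[ε₁, √2 ε₁]` up to the Jacobian defect `|y / √(2ε₁² - y²) - 1| ≤ 2 (ε₁² - y²) / ε₁²`.
Since `|u| |g u| ≤ 1`, the defect times the kernel is at most `2 / ε₁²`, hence the integral over
`[0, ε₁]` is at most `2 / ε₁`.
On `[√2 ε₁, M]` the kernel is at most `2 / x²`, whose integral is at most `2 / ε₁`.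
-/

theorem integral_sign_sq_sub_sq_mul {f : ℝ → ℝ} (hf : Continuous f) {a M : ℝ} (ha : 0 ≤ a)
    (haM : a ≤ M) :
    ∫ x in (0:ℝ)..M, sign (x ^ 2 - a ^ 2) * f x = (∫ x in a..M, f x) - ∫ x in (0:ℝ)..a, f x := by
  have hright : ∀ x ∈ uIoc a M, sign (x ^ 2 - a ^ 2) * f x = f x := by
    intro x hx
    rw [uIoc_of_le haM] at hx
    simp [sign_of_pos (sub_pos.2 (pow_lt_pow_left₀ hx.1 ha two_ne_zero))]
  have hleft : ∀ᵐ x, x ∈ uIoc 0 a → sign (x ^ 2 - a ^ 2) * f x = -f x := by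
    filter_upwards [volume.ae_ne a] with x hxa hx
    rw [uIoc_of_le ha] at hx
    simp [sign_of_neg (sub_neg.2 (pow_lt_pow_left₀ (hx.2.lt_of_ne hxa) hx.1.le two_ne_zero))]
  have hleft' := (ae_restrict_iff' measurableSet_uIoc).2 hleft
  rw [← integral_add_adjacent_intervals
      ((hf.intervalIntegrable 0 a).neg.congr_ae (Filter.EventuallyEq.symm hleft'))
      ((hf.intervalIntegrable a M).congr fun x hx ↦ (hright x hx).symm),
    integral_congr_ae (.of_forall hright), integral_congr_ae hleft, intervalIntegral.integral_neg]
  ring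

theorem integral_comp_sqrt_two_mul_sq_sub_sq {h : ℝ → ℝ} (hh : Continuous h) {a : ℝ}
    (ha : 0 < a) :
    ∫ x in a..√2 * a, h x
      = ∫ y in (0:ℝ)..a, y / √(2 * a ^ 2 - y ^ 2) * h √(2 * a ^ 2 - y ^ 2) := by
  have hpos : ∀ y ∈ uIcc 0 a, 0 < 2 * a ^ 2 - y ^ 2 := by
    intro y hy
    rw [uIcc_of_le ha.le] at hy
    nlinarith [hy.1, hy.2]
  have hderiv : ∀ y ∈ uIcc 0 a,
      HasDerivAt (fun y ↦ √(2 * a ^ 2 - y ^ 2)) (-(y / √(2 * a ^ 2 - y ^ 2))) y := by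
    intro y hy
    convert ((hasDerivAt_pow 2 y).const_sub (2 * a ^ 2)).sqrt (hpos y hy).ne' using 1
    field_simp
    ring
  have hcont : ContinuousOn (fun y ↦ -(y / √(2 * a ^ 2 - y ^ 2))) (uIcc 0 a) :=
    (continuousOn_id.div (by fun_prop) fun y hy ↦ (sqrt_pos.2 (hpos y hy)).ne').neg
  have hsubst := integral_comp_mul_deriv hderiv hcont hh
  rw [zero_pow two_ne_zero, sub_zero, sqrt_mul zero_le_two, sqrt_sq ha.le,
    show 2 * a ^ 2 - a ^ 2 = a ^ 2 by ring, sqrt_sq ha.le] at hsubst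
  rw [integral_symm, ← hsubst, ← intervalIntegral.integral_neg]
  simp only [Function.comp_apply, mul_neg, neg_neg, mul_comm]

theorem abs_integral_le_div_of_abs_le_div_sq {f : ℝ → ℝ} {c M C : ℝ} (hc : 0 < c) (hcM : c ≤ M)
    (hf : IntervalIntegrable f volume c M) (hbound : ∀ x ∈ Icc c M, |f x| ≤ C / x ^ 2) :
    |∫ x in c..M, f x| ≤ C / c := by
  have hC : 0 ≤ C := by
    have := mul_nonneg ((abs_nonneg _).trans (hbound c ⟨le_rfl, hcM⟩)) (sq_nonneg c)
    rwa [div_mul_cancel₀ _ (pow_pos hc 2).ne'] at this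
  have h0 : (0:ℝ) ∉ uIcc c M := by
    rw [uIcc_of_le hcM]; exact fun h ↦ h.1.not_gt hc
  calc |∫ x in c..M, f x| ≤ ∫ x in c..M, |f x| := abs_integral_le_integral_abs hcM
    _ ≤ ∫ x in c..M, C * x ^ (-2 : ℤ) := by
        refine integral_mono_on hcM hf.abs ?_ fun x hx ↦ ?_
        · exact (continuousOn_const.mul (continuousOn_id.zpow₀ _ fun x hx ↦
            Or.inl fun h ↦ h0 (h ▸ hx))).intervalIntegrable
        · simpa [zpow_neg, div_eq_mul_inv] using hbound x hx
    _ = C / c - C / M := by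
        rw [intervalIntegral.integral_const_mul, integral_zpow (Or.inr ⟨by norm_num, h0⟩)]
        norm_num
        ring
    _ ≤ C / c := sub_le_self _ (div_nonneg hC (hc.le.trans hcM))

theorem abs_div_sqrt_two_mul_sq_sub_sq_sub_one_le {a y : ℝ} (ha : 0 < a) (hy : 0 ≤ y)
    (hya : y ≤ a) : |y / √(2 * a ^ 2 - y ^ 2) - 1| ≤ 2 * (a ^ 2 - y ^ 2) / a ^ 2 := by
  set s := √(2 * a ^ 2 - y ^ 2)
  have hs_sq : s ^ 2 = 2 * a ^ 2 - y ^ 2 := sq_sqrt (by nlinarith)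
  have has : a ≤ s := le_sqrt_of_sq_le (by nlinarith)
  have hs : 0 < s := ha.trans_le has
  have hys : y / s ≤ 1 := (div_le_one hs).2 (hya.trans has)
  rw [abs_sub_comm, abs_of_nonneg (sub_nonneg.2 hys), one_sub_div hs.ne',
    div_le_div_iff₀ hs (by positivity)]
  -- `s - y = 2 (a² - y²) / (s + y)`, with `s + y ≥ a` and `s ≥ a`
  nlinarith [mul_le_mul has has ha.le hs.le, mul_nonneg hy (sub_nonneg.2 (hya.trans has))]

theorem abs_div_sqrt_sub_one_mul_le {a y t : ℝ} (ha : 0 < a) (hy : 0 ≤ y) (hya : y ≤ a)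
    (ht : |y ^ 2 - a ^ 2| * |t| ≤ 1) :
    |(y / √(2 * a ^ 2 - y ^ 2) - 1) * t| ≤ 2 / a ^ 2 := by
  rw [abs_sub_comm, abs_of_nonneg (by nlinarith)] at ht
  calc _ ≤ 2 * (a ^ 2 - y ^ 2) / a ^ 2 * |t| := by
        rw [abs_mul]
        gcongr
        exact abs_div_sqrt_two_mul_sq_sub_sq_sub_one_le ha hy hya
    _ = 2 / a ^ 2 * ((a ^ 2 - y ^ 2) * |t|) := by ring
    _ ≤ 2 / a ^ 2 := mul_le_of_le_one_right (by positivity) ht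

theorem abs_le_two_div_sq_of_sqrt_two_mul_le {a x t : ℝ} (ha : 0 < a) (hx : √2 * a ≤ x)
    (ht : |x ^ 2 - a ^ 2| * |t| ≤ 1) : |t| ≤ 2 / x ^ 2 := by
  have hx0 : 0 < x := (by positivity : 0 < √2 * a).trans_le hx
  have hx2 : 2 * a ^ 2 ≤ x ^ 2 := by
    simpa [mul_pow] using pow_le_pow_left₀ (by positivity) hx 2
  rw [abs_of_nonneg (by nlinarith)] at ht
  rw [le_div_iff₀ (by positivity)]
  nlinarith [abs_nonneg t]

theorem integral_sqrt_two_mul_sub_integral_comp_sq_sub_sq {g : ℝ → ℝ} (hg : Continuous g)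
    (heven : ∀ u, g (-u) = g u) {a : ℝ} (ha : 0 < a) :
    (∫ x in a..√2 * a, g (x ^ 2 - a ^ 2)) - ∫ x in (0:ℝ)..a, g (x ^ 2 - a ^ 2)
      = ∫ y in (0:ℝ)..a, (y / √(2 * a ^ 2 - y ^ 2) - 1) * g (y ^ 2 - a ^ 2) := by
  have hpos : ∀ y ∈ uIcc 0 a, 0 < 2 * a ^ 2 - y ^ 2 := by
    intro y hy
    rw [uIcc_of_le ha.le] at hy
    nlinarith [hy.1, hy.2]
  rw [integral_comp_sqrt_two_mul_sq_sub_sq (by fun_prop) ha, ← intervalIntegral.integral_sub]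
  · refine integral_congr fun y hy ↦ ?_
    rw [sq_sqrt (hpos y hy).le, show 2 * a ^ 2 - y ^ 2 - a ^ 2 = -(y ^ 2 - a ^ 2) by ring, heven]
    ring
  · refine ContinuousOn.intervalIntegrable (ContinuousOn.mul ?_ (by fun_prop))
    exact continuousOn_id.div (by fun_prop) fun y hy ↦ (sqrt_pos.2 (hpos y hy)).ne'
  · exact (by fun_prop : Continuous fun y ↦ g (y ^ 2 - a ^ 2)).intervalIntegrable _ _

theorem abs_integral_sign_sq_sub_sq_mul_le {g : ℝ → ℝ} (hg : Continuous g)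
    (heven : ∀ u, g (-u) = g u) (hdecay : ∀ u, |u| * |g u| ≤ 1) {a M : ℝ} (ha : 0 < a)
    (hM : √2 * a ≤ M) :
    |∫ x in (0:ℝ)..M, sign (x ^ 2 - a ^ 2) * g (x ^ 2 - a ^ 2)| ≤ 4 / a := by
  have hc : a ≤ √2 * a := le_mul_of_one_le_left ha.le (one_le_sqrt.2 one_le_two)
  have hk : Continuous fun x ↦ g (x ^ 2 - a ^ 2) := by fun_prop
  rw [integral_sign_sq_sub_sq_mul hk ha.le (hc.trans hM), ← integral_add_adjacent_intervals
    (hk.intervalIntegrable a (√2 * a)) (hk.intervalIntegrable _ M), add_sub_right_comm,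
    integral_sqrt_two_mul_sub_integral_comp_sq_sub_sq hg heven ha]
  have hnear :
      |∫ y in (0:ℝ)..a, (y / √(2 * a ^ 2 - y ^ 2) - 1) * g (y ^ 2 - a ^ 2)| ≤ 2 / a := by
    have hbound : ∀ y ∈ uIoc 0 a,
        ‖(y / √(2 * a ^ 2 - y ^ 2) - 1) * g (y ^ 2 - a ^ 2)‖ ≤ 2 / a ^ 2 := fun y hy ↦ by
      rw [uIoc_of_le ha.le] at hy
      exact abs_div_sqrt_sub_one_mul_le ha hy.1.le hy.2 (hdecay (y ^ 2 - a ^ 2))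
    have := intervalIntegral.norm_integral_le_of_norm_le_const hbound
    rw [norm_eq_abs, sub_zero, abs_of_pos ha] at this
    exact this.trans_eq (by field_simp)
  have htail : |∫ x in √2 * a..M, g (x ^ 2 - a ^ 2)| ≤ 2 / a :=
    (abs_integral_le_div_of_abs_le_div_sq (by positivity) hM (hk.intervalIntegrable _ _)
      fun x hx ↦ abs_le_two_div_sq_of_sqrt_two_mul_le ha hx.1 (hdecay (x ^ 2 - a ^ 2))).trans
      (div_le_div_of_nonneg_left zero_le_two ha hc)
  calc _ ≤ _ := abs_add_le _ _
    _ ≤ 2 / a + 2 / a := add_le_add hnear htail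
    _ = 4 / a := by ring

theorem abs_mul_inv_sqrt_sq_add_le_one (u : ℝ) {c : ℝ} (hc : 0 ≤ c) :
    |u| * |(√(u ^ 2 + c))⁻¹| ≤ 1 := by
  rw [abs_inv, abs_of_nonneg (sqrt_nonneg _), ← div_eq_mul_inv]
  exact div_le_one_of_le₀ (abs_le_sqrt (by linarith)) (sqrt_nonneg _)

/-- `|∫₀^M sgn(x² − ε₁²)/√((x² − ε₁²)² + ε₂⁴) dx| ≤ C/ε₁` for `0 < ε₂ ≤ ε₁` and
`M ≥ √2 ε₁`, with an absolute constant `C`. -/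
theorem integral_sign_div_sqrt_bound :
    ∃ C > 0, ∀ ε₁ ε₂ M : ℝ, 0 < ε₂ → ε₂ ≤ ε₁ → Real.sqrt 2 * ε₁ ≤ M →
      |∫ x in (0:ℝ)..M,
          Real.sign (x ^ 2 - ε₁ ^ 2) / Real.sqrt ((x ^ 2 - ε₁ ^ 2) ^ 2 + ε₂ ^ 4)|
        ≤ C / ε₁ := by
  refine ⟨4, by norm_num, fun a b M hb hba hM ↦ ?_⟩
  have hg : Continuous fun u : ℝ ↦ (√(u ^ 2 + b ^ 4))⁻¹ :=
    (by fun_prop : Continuous fun u : ℝ ↦ √(u ^ 2 + b ^ 4)).inv₀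
      fun u ↦ (sqrt_pos.2 (by positivity)).ne'
  simpa only [div_eq_mul_inv] using abs_integral_sign_sq_sub_sq_mul_le hg (fun u ↦ by rw [neg_sq])
    (fun u ↦ abs_mul_inv_sqrt_sq_add_le_one u (by positivity)) (hb.trans_le hba) hM
end

section
/- There exist absolute constants c > 0 and C > 0 such that for all real numbers ε₁ > 0 and ε₂ > 0 and every M ≥ max(ε₁, ε₂), one has c/max(ε₁, ε₂) ≤ ∫₀^M (x² + ε₁²)/((x² + ε₁²)² + ε₂⁴) dx ≤ C/max(ε₁, ε₂). -/
/-!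
Write `m = max ε₁ ε₂` and `u = x² + ε₁²`, so the integrand is `u / (u² + ε₂⁴)`.
It is at most `1 / u ≤ 1 / x²`, and at most `1 / m²`: when `m = ε₁` because `u ≥ ε₁²`,
when `m = ε₂` because `2 u ε₂² ≤ u² + ε₂⁴`. Integrating `min (1 / m²) (1 / x²)` gives `2 / m`.
For the lower bound, on `[0, m]` the denominator is at most `(2m²)² + m⁴ = 5m⁴` while the
numerator is at least `x²`, which gives `1 / (15 m)`.
-/

open intervalIntegral Set
open MeasureTheory (volume)

noncomputable def integrand (ε₁ ε₂ x : ℝ) : ℝ := (x ^ 2 + ε₁ ^ 2) / ((x ^ 2 + ε₁ ^ 2) ^ 2 + ε₂ ^ 4)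

section Integrand

variable {ε₁ ε₂ : ℝ}

theorem integrand_nonneg (x : ℝ) : 0 ≤ integrand ε₁ ε₂ x := by
  unfold integrand; positivity

theorem continuous_integrand (hε₂ : ε₂ ≠ 0) : Continuous (integrand ε₁ ε₂) := by
  unfold integrand
  exact Continuous.div (by fun_prop) (by fun_prop) fun x => by positivity

theorem integrand_le_inv_sq {x : ℝ} (hx : x ≠ 0) : integrand ε₁ ε₂ x ≤ (x ^ 2)⁻¹ := by
  unfold integrand
  calc (x ^ 2 + ε₁ ^ 2) / ((x ^ 2 + ε₁ ^ 2) ^ 2 + ε₂ ^ 4)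
      ≤ (x ^ 2 + ε₁ ^ 2) / (x ^ 2 + ε₁ ^ 2) ^ 2 := by
        gcongr; exact le_add_of_nonneg_right (by positivity)
    _ = (x ^ 2 + ε₁ ^ 2)⁻¹ := by field_simp
    _ ≤ (x ^ 2)⁻¹ := by gcongr; exact le_add_of_nonneg_right (sq_nonneg ε₁)

theorem integrand_le_inv_max_sq (hε₂ : 0 < ε₂) (x : ℝ) :
    integrand ε₁ ε₂ x ≤ (max ε₁ ε₂ ^ 2)⁻¹ := by
  unfold integrand
  have hden : 0 < (x ^ 2 + ε₁ ^ 2) ^ 2 + ε₂ ^ 4 := by positivity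
  rw [div_le_iff₀ hden, ← div_eq_inv_mul, le_div_iff₀ (by positivity)]
  rcases max_cases ε₁ ε₂ with ⟨h, -⟩ | ⟨h, -⟩ <;> rw [h]
  · nlinarith [sq_nonneg x, sq_nonneg ε₂]
  · nlinarith [sq_nonneg (x ^ 2 + ε₁ ^ 2 - ε₂ ^ 2), sq_nonneg x, sq_nonneg ε₁]

theorem inv_mul_sq_le_integrand (hε₁ : 0 ≤ ε₁) (hε₂ : 0 < ε₂) {x : ℝ} (hx₀ : 0 ≤ x)
    (hx : x ≤ max ε₁ ε₂) : (5 * max ε₁ ε₂ ^ 4)⁻¹ * x ^ 2 ≤ integrand ε₁ ε₂ x := by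
  unfold integrand
  rw [← div_eq_inv_mul]
  have hx2 : x ^ 2 ≤ max ε₁ ε₂ ^ 2 := by gcongr
  have h₁ : ε₁ ^ 2 ≤ max ε₁ ε₂ ^ 2 := by gcongr; exact le_max_left _ _
  have h₂ : ε₂ ^ 2 ≤ max ε₁ ε₂ ^ 2 := by gcongr; exact le_max_right _ _
  have hu : (x ^ 2 + ε₁ ^ 2) ^ 2 ≤ (2 * max ε₁ ε₂ ^ 2) ^ 2 := by gcongr; linarith
  refine div_le_div₀ (by positivity) (by nlinarith) (by positivity) ?_
  nlinarith [sq_nonneg ε₂]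

end Integrand

section Integral

variable {f : ℝ → ℝ} {m M : ℝ}

theorem integral_inv_sq_le {a b : ℝ} (ha : 0 < a) (hab : a ≤ b) :
    ∫ x in a..b, (x ^ 2)⁻¹ ≤ a⁻¹ := by
  have h0 : (0 : ℝ) ∉ uIcc a b := by
    rw [uIcc_of_le hab]; exact fun h => ha.not_ge h.1
  have hzpow : ∫ x in a..b, (x ^ 2)⁻¹ = ∫ x in a..b, x ^ (-2 : ℤ) := by
    simp only [zpow_neg, zpow_ofNat]
  rw [hzpow, integral_zpow (Or.inr ⟨by norm_num, h0⟩)]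
  have hb : 0 < b⁻¹ := inv_pos.2 (ha.trans_le hab)
  norm_num
  linarith

theorem integral_le_two_div (hm : 0 < m) (hmM : m ≤ M) (hf : IntervalIntegrable f volume 0 M)
    (h_small : ∀ x ∈ Icc 0 m, f x ≤ (m ^ 2)⁻¹) (h_large : ∀ x ∈ Icc m M, f x ≤ (x ^ 2)⁻¹) :
    ∫ x in (0 : ℝ)..M, f x ≤ 2 / m := by
  have hf₁ : IntervalIntegrable f volume 0 m :=
    hf.mono_set (uIcc_subset_uIcc left_mem_uIcc (mem_uIcc_of_le hm.le hmM))
  have hf₂ : IntervalIntegrable f volume m M :=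
    hf.mono_set (uIcc_subset_uIcc (mem_uIcc_of_le hm.le hmM) right_mem_uIcc)
  have h_inv_sq : IntervalIntegrable (fun x : ℝ => (x ^ 2)⁻¹) volume m M := by
    refine (ContinuousOn.inv₀ (by fun_prop) fun x hx => ?_).intervalIntegrable
    rw [uIcc_of_le hmM] at hx
    exact pow_ne_zero 2 (hm.trans_le hx.1).ne'
  rw [← integral_add_adjacent_intervals hf₁ hf₂]
  have h₁ : ∫ x in (0 : ℝ)..m, f x ≤ m⁻¹ := by
    calc ∫ x in (0 : ℝ)..m, f x ≤ ∫ _ in (0 : ℝ)..m, (m ^ 2)⁻¹ :=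
          integral_mono_on hm.le hf₁ intervalIntegrable_const h_small
      _ = m⁻¹ := by rw [integral_const, smul_eq_mul, sub_zero]; field_simp
  have h₂ : ∫ x in m..M, f x ≤ m⁻¹ :=
    (integral_mono_on hmM hf₂ h_inv_sq h_large).trans (integral_inv_sq_le hm hmM)
  calc _ ≤ m⁻¹ + m⁻¹ := add_le_add h₁ h₂
    _ = 2 / m := by ring

theorem mul_cube_div_three_le_integral {c : ℝ} (hm : 0 ≤ m) (hmM : m ≤ M)
    (hf : IntervalIntegrable f volume 0 M) (h_nonneg : ∀ x ∈ Icc m M, 0 ≤ f x)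
    (h_small : ∀ x ∈ Icc 0 m, c * x ^ 2 ≤ f x) :
    c * m ^ 3 / 3 ≤ ∫ x in (0 : ℝ)..M, f x := by
  have hf₁ : IntervalIntegrable f volume 0 m :=
    hf.mono_set (uIcc_subset_uIcc left_mem_uIcc (mem_uIcc_of_le hm hmM))
  have hf₂ : IntervalIntegrable f volume m M :=
    hf.mono_set (uIcc_subset_uIcc (mem_uIcc_of_le hm hmM) right_mem_uIcc)
  rw [← integral_add_adjacent_intervals hf₁ hf₂]
  have h₁ : c * m ^ 3 / 3 ≤ ∫ x in (0 : ℝ)..m, f x := by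
    calc c * m ^ 3 / 3 = ∫ x in (0 : ℝ)..m, c * x ^ 2 := by
          rw [integral_const_mul, integral_pow]; ring
      _ ≤ _ := integral_mono_on hm (by apply Continuous.intervalIntegrable; fun_prop) hf₁ h_small
  linarith [integral_nonneg (μ := volume) hmM h_nonneg]

end Integral

/-- Two-sided estimate
`c/max(ε₁,ε₂) ≤ ∫₀^M (x² + ε₁²)/((x² + ε₁²)² + ε₂⁴) dx ≤ C/max(ε₁,ε₂)`. -/
theorem integral_rational_bounds :
    ∃ c > 0, ∃ C > 0, ∀ ε₁ ε₂ M : ℝ, 0 < ε₁ → 0 < ε₂ → max ε₁ ε₂ ≤ M →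
      c / max ε₁ ε₂ ≤
          (∫ x in (0:ℝ)..M, (x ^ 2 + ε₁ ^ 2) / ((x ^ 2 + ε₁ ^ 2) ^ 2 + ε₂ ^ 4)) ∧
      (∫ x in (0:ℝ)..M, (x ^ 2 + ε₁ ^ 2) / ((x ^ 2 + ε₁ ^ 2) ^ 2 + ε₂ ^ 4)) ≤
          C / max ε₁ ε₂ := by
  refine ⟨1 / 15, by norm_num, 2, by norm_num, fun ε₁ ε₂ M hε₁ hε₂ hM => ?_⟩
  have hm : 0 < max ε₁ ε₂ := hε₂.trans_le (le_max_right _ _)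
  have hf : IntervalIntegrable (integrand ε₁ ε₂) volume 0 M :=
    (continuous_integrand hε₂.ne').intervalIntegrable _ _
  constructor
  · calc 1 / 15 / max ε₁ ε₂ = (5 * max ε₁ ε₂ ^ 4)⁻¹ * max ε₁ ε₂ ^ 3 / 3 := by
          field_simp; ring
      _ ≤ ∫ x in (0 : ℝ)..M, integrand ε₁ ε₂ x :=
        mul_cube_div_three_le_integral hm.le hM hf (fun x _ => integrand_nonneg x)
          fun x hx => inv_mul_sq_le_integrand hε₁.le hε₂ hx.1 hx.2
  · exact integral_le_two_div hm hM hf (fun x _ => integrand_le_inv_max_sq hε₂ x)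
      fun x hx => integrand_le_inv_sq (hm.trans_le hx.1).ne'
end
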